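/- Under the hypotheses of the minimax theorem (finite 𝒳, 𝒴, closed convex 𝒟 ⊆ 𝒫(𝒳×𝒴), h* := max_{p∈𝒟} H_p(Y|X)), the set ∩_{p∈𝒟} {q ∈ 𝒫(𝒴|𝒳) : E_p[−log q(Y|X)] ≤ h*} is nonempty, i.e., there exists a single decision rule q achieving loss at most h* simultaneously against every distribution in 𝒟. -/

import Mathlib

open scoped BigOperators

variable {𝒳 𝒴 : Type*}

/-- `p` is a probability distribution on `𝒳 × 𝒴`. -/
def IsDist [Fintype 𝒳] [Fintype 𝒴] (p : 𝒳 × 𝒴 → ℝ) : Prop :=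
  (∀ a, 0 ≤ p a) ∧ ∑ a, p a = 1

/-- `q` is a conditional distribution (stochastic matrix) from `𝒳` to `𝒴`. -/
def IsCond [Fintype 𝒴] (q : 𝒳 → 𝒴 → ℝ) : Prop :=
  (∀ x y, 0 ≤ q x y) ∧ ∀ x, ∑ y, q x y = 1

/-- Marginal of `X`. -/
noncomputable def margX [Fintype 𝒴] (p : 𝒳 × 𝒴 → ℝ) (x : 𝒳) : ℝ := ∑ y, p (x, y)

/-- Conditional entropy `H_p(Y|X)` (natural log, `0 log 0 = 0`). -/
noncomputable def condEnt [Fintype 𝒳] [Fintype 𝒴] (p : 𝒳 × 𝒴 → ℝ) : ℝ :=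
  -∑ a, p a * Real.log (p a / margX p a.1)

/-- Expected cross-entropy loss `E_p[-log q(Y|X)]`, valued in `EReal` with value `⊤`
when `q(y|x) = 0` while `p(x,y) > 0`. -/
noncomputable def CEE [Fintype 𝒳] [Fintype 𝒴] (p : 𝒳 × 𝒴 → ℝ) (q : 𝒳 → 𝒴 → ℝ) : EReal :=
  ∑ a, if q a.1 a.2 = 0 ∧ 0 < p a then (⊤ : EReal)
       else ((p a * (-Real.log (q a.1 a.2)) : ℝ) : EReal)

/-!
If `p̄` maximises `H(Y|X)` over a convex family of strictly positive weights, its conditional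
`p̄(y|x)` is a robust rule for the family. For `r` in the family let `q_t` be the conditional of
`(1 - t) p̄ + t r`; then by Gibbs' inequality
`H(p̄) ≥ H((1 - t) p̄ + t r) = (1 - t) L(p̄, q_t) + t L(r, q_t) ≥ (1 - t) H(p̄) + t L(r, q_t)`,
so `L(r, q_t) ≤ H(p̄)`, and `q_t → p̄(·|·)` as `t → 0`. This limit needs `p̄ > 0`, so the
argument is run on the shifted family `𝒟 + ε`, which only increases losses; letting `ε → 0`
along a subsequence on which the maximisers and their conditionals converge, lower
semicontinuity of the loss in the rule gives a rule with loss at most `h*` against all of `𝒟`.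
-/

open Filter Topology Real

noncomputable def condProb [Fintype 𝒴] (p : 𝒳 × 𝒴 → ℝ) (x : 𝒳) (y : 𝒴) : ℝ :=
  p (x, y) / margX p x

/-- Since `log 0 = 0`, this is `CEE p q` only when `q > 0` on the support of `p`. -/
noncomputable def logLoss [Fintype 𝒳] [Fintype 𝒴] (p : 𝒳 × 𝒴 → ℝ) (q : 𝒳 → 𝒴 → ℝ) : ℝ :=
  ∑ a, p a * -log (q a.1 a.2)

section Cond

variable [Fintype 𝒴] {p : 𝒳 × 𝒴 → ℝ} {q : 𝒳 → 𝒴 → ℝ}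

lemma IsCond.le_one (hq : IsCond q) (x : 𝒳) (y : 𝒴) : q x y ≤ 1 :=
  hq.2 x ▸ Finset.single_le_sum (fun y _ => hq.1 x y) (Finset.mem_univ y)

lemma IsCond.neg_log_nonneg (hq : IsCond q) (x : 𝒳) (y : 𝒴) : 0 ≤ -log (q x y) :=
  neg_nonneg.2 (log_nonpos (hq.1 x y) (hq.le_one x y))

lemma le_margX (hp : ∀ a, 0 ≤ p a) (a : 𝒳 × 𝒴) : p a ≤ margX p a.1 :=
  Finset.single_le_sum (f := fun y => p (a.1, y)) (fun y _ => hp (a.1, y)) (Finset.mem_univ a.2)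

lemma margX_nonneg (hp : ∀ a, 0 ≤ p a) (x : 𝒳) : 0 ≤ margX p x :=
  Finset.sum_nonneg fun y _ => hp (x, y)

lemma margX_pos [Nonempty 𝒴] (hp : ∀ a, 0 < p a) (x : 𝒳) : 0 < margX p x :=
  Finset.sum_pos (fun y _ => hp (x, y)) Finset.univ_nonempty

lemma condProb_pos (hp : ∀ a, 0 < p a) (x : 𝒳) (y : 𝒴) : 0 < condProb p x y :=
  div_pos (hp (x, y)) ((hp (x, y)).trans_le (le_margX (fun a => (hp a).le) (x, y)))

lemma isCond_condProb [Nonempty 𝒴] (hp : ∀ a, 0 < p a) : IsCond (condProb p) :=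
  ⟨fun x y => (condProb_pos hp x y).le, fun x => by
    simp only [condProb, ← Finset.sum_div]; exact div_self (margX_pos hp x).ne'⟩

lemma continuousAt_condProb (hp : ∀ x, margX p x ≠ 0) :
    ContinuousAt (condProb (𝒳 := 𝒳) (𝒴 := 𝒴)) p := by
  refine continuousAt_pi.2 fun x => continuousAt_pi.2 fun y => ?_
  unfold condProb margX
  exact (continuous_apply (x, y)).continuousAt.div
    (continuous_finsetSum _ fun y _ => continuous_apply (x, y)).continuousAt (hp x)

lemma isCompact_setOf_isCond : IsCompact {q : 𝒳 → 𝒴 → ℝ | IsCond q} := by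
  have hclosed : IsClosed {q : 𝒳 → 𝒴 → ℝ | IsCond q} := by
    simp only [IsCond, Set.ofPred_and, Set.ofPred_forall]
    exact (isClosed_iInter fun x => isClosed_iInter fun y =>
      isClosed_le continuous_const (by fun_prop)).inter
      (isClosed_iInter fun x => isClosed_eq (by fun_prop) continuous_const)
  refine (isCompact_univ_pi fun _ => isCompact_univ_pi fun _ =>
    isCompact_Icc (a := (0 : ℝ)) (b := 1)).of_isClosed_subset hclosed fun q hq => ?_
  exact Set.mem_univ_pi.2 fun x => Set.mem_univ_pi.2 fun y => ⟨hq.1 x y, hq.le_one x y⟩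

end Cond

section Loss

variable [Fintype 𝒳] [Fintype 𝒴] {p r : 𝒳 × 𝒴 → ℝ} {q : 𝒳 → 𝒴 → ℝ}

lemma condEnt_eq_logLoss_condProb (p : 𝒳 × 𝒴 → ℝ) : condEnt p = logLoss p (condProb p) := by
  simp [condEnt, logLoss, condProb]

lemma logLoss_add_smul (s t : ℝ) (p r : 𝒳 × 𝒴 → ℝ) (q : 𝒳 → 𝒴 → ℝ) :
    logLoss (s • p + t • r) q = s * logLoss p q + t * logLoss r q := by
  simp only [logLoss, Pi.add_apply, Pi.smul_apply, smul_eq_mul, Finset.mul_sum,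
    ← Finset.sum_add_distrib]
  exact Finset.sum_congr rfl fun a _ => by ring

lemma logLoss_mono_left (hq : IsCond q) (h : p ≤ r) : logLoss p q ≤ logLoss r q :=
  Finset.sum_le_sum fun a _ => mul_le_mul_of_nonneg_right (h a) (hq.neg_log_nonneg a.1 a.2)

lemma continuousAt_logLoss (h : ∀ a, p a ≠ 0 → q a.1 a.2 ≠ 0) : ContinuousAt (logLoss p) q := by
  unfold logLoss
  refine tendsto_finsetSum _ fun a _ => ?_
  by_cases ha : p a = 0
  · simp only [ha, zero_mul]; exact tendsto_const_nhds
  · have hev : Continuous fun q : 𝒳 → 𝒴 → ℝ => q a.1 a.2 := by fun_prop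
    exact tendsto_const_nhds.mul (hev.continuousAt.log (h a ha)).neg

lemma condEnt_le_logLoss (hp : ∀ a, 0 ≤ p a) (hq : IsCond q)
    (hpos : ∀ a, 0 < p a → 0 < q a.1 a.2) : condEnt p ≤ logLoss p q := by
  have hterm : ∀ a : 𝒳 × 𝒴, p a * -log (condProb p a.1 a.2)
      ≤ p a * -log (q a.1 a.2) + (margX p a.1 * q a.1 a.2 - p a) := by
    intro a
    rcases (hp a).eq_or_lt with h0 | hpa
    · rw [← h0]; simpa using mul_nonneg (margX_nonneg hp a.1) (hq.1 a.1 a.2)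
    have hm : 0 < margX p a.1 := hpa.trans_le (le_margX hp a)
    have hqa := hpos a hpa
    have hlog : log (margX p a.1 * q a.1 a.2 / p a) ≤ margX p a.1 * q a.1 a.2 / p a - 1 :=
      log_le_sub_one_of_pos (by positivity)
    have hcancel : p a * (margX p a.1 * q a.1 a.2 / p a) = margX p a.1 * q a.1 a.2 := by
      field_simp
    rw [condProb, log_div hpa.ne' hm.ne']
    rw [log_div (by positivity) hpa.ne', log_mul hm.ne' hqa.ne'] at hlog
    nlinarith [mul_le_mul_of_nonneg_left hlog hpa.le]
  have hsum : ∑ a : 𝒳 × 𝒴, (margX p a.1 * q a.1 a.2 - p a) = 0 := by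
    simp [Finset.sum_sub_distrib, Fintype.sum_prod_type, ← Finset.mul_sum, hq.2, margX]
  rw [condEnt_eq_logLoss_condProb]
  calc logLoss p (condProb p) ≤ ∑ a, (p a * -log (q a.1 a.2) + (margX p a.1 * q a.1 a.2 - p a)) :=
        Finset.sum_le_sum fun a _ => hterm a
    _ = logLoss p q := by rw [Finset.sum_add_distrib, hsum, add_zero]; rfl

lemma condEnt_eq_sum_negMulLog (hp : ∀ a, 0 ≤ p a) :
    condEnt p = ∑ a, negMulLog (p a) - ∑ x, negMulLog (margX p x) := by
  have hterm : ∀ a : 𝒳 × 𝒴, p a * log (p a / margX p a.1)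
      = -negMulLog (p a) - p a * log (margX p a.1) := by
    intro a
    rcases (hp a).eq_or_lt with h0 | hpa
    · simp [← h0]
    · rw [log_div hpa.ne' (hpa.trans_le (le_margX hp a)).ne', negMulLog]
      ring
  have hmarg : ∑ a : 𝒳 × 𝒴, p a * log (margX p a.1) = -∑ x, negMulLog (margX p x) := by
    simp only [Fintype.sum_prod_type, ← Finset.sum_mul, negMulLog, ← Finset.sum_neg_distrib]
    exact Finset.sum_congr rfl fun x _ => by rw [margX]; ring
  rw [condEnt, Finset.sum_congr rfl fun a _ => hterm a, Finset.sum_sub_distrib, hmarg,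
    Finset.sum_neg_distrib]
  ring

lemma continuousOn_condEnt : ContinuousOn (condEnt (𝒳 := 𝒳) (𝒴 := 𝒴)) {p | ∀ a, 0 ≤ p a} := by
  refine ContinuousOn.congr ?_ fun p hp => condEnt_eq_sum_negMulLog hp
  unfold margX
  fun_prop

lemma logLoss_condProb_le_of_isMaxOn [Nonempty 𝒴] {𝒞 : Set (𝒳 × 𝒴 → ℝ)}
    (hconv : Convex ℝ 𝒞) (hpos : ∀ p ∈ 𝒞, ∀ a, 0 < p a) (hp : p ∈ 𝒞)
    (hmax : IsMaxOn condEnt 𝒞 p) (hr : r ∈ 𝒞) :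
    logLoss r (condProb p) ≤ condEnt p := by
  set mix : ℝ → 𝒳 × 𝒴 → ℝ := fun t => (1 - t) • p + t • r
  have hmix : ∀ t ∈ Set.Ioo (0 : ℝ) 1, logLoss r (condProb (mix t)) ≤ condEnt p := by
    rintro t ⟨ht0, ht1⟩
    have hmem : mix t ∈ 𝒞 := hconv hp hr (by linarith) ht0.le (by ring)
    have hgibbs : condEnt p ≤ logLoss p (condProb (mix t)) :=
      condEnt_le_logLoss (fun a => (hpos p hp a).le) (isCond_condProb (hpos _ hmem))
        fun a _ => condProb_pos (hpos _ hmem) a.1 a.2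
    have hsplit : condEnt (mix t)
        = (1 - t) * logLoss p (condProb (mix t)) + t * logLoss r (condProb (mix t)) := by
      rw [condEnt_eq_logLoss_condProb, logLoss_add_smul]
    have hle : t * logLoss r (condProb (mix t)) ≤ t * condEnt p := by
      nlinarith [isMaxOn_iff.1 hmax _ hmem, mul_le_mul_of_nonneg_left hgibbs (sub_nonneg.2 ht1.le)]
    exact le_of_mul_le_mul_left hle ht0
  have hlim : Tendsto (fun t => logLoss r (condProb (mix t))) (𝓝 0)
      (𝓝 (logLoss r (condProb p))) := by
    have hmix_lim : Tendsto mix (𝓝 0) (𝓝 p) := by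
      simpa [mix] using ((by fun_prop : Continuous mix).tendsto 0)
    refine (continuousAt_logLoss fun a _ => ?_).tendsto.comp
      ((continuousAt_condProb fun x => ?_).tendsto.comp hmix_lim)
    · exact (condProb_pos (hpos p hp) a.1 a.2).ne'
    · exact (margX_pos (hpos p hp) x).ne'
  exact le_of_tendsto (hlim.mono_left (nhdsWithin_le_nhds (s := Set.Ioi 0)))
    (mem_of_superset (Ioo_mem_nhdsGT one_pos) hmix)

lemma IsDist.nonempty_right (hp : IsDist p) : Nonempty 𝒴 := by
  by_contra h
  have : IsEmpty 𝒴 := not_nonempty_iff.1 h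
  simpa using hp.2

lemma isCompact_of_isDist {𝒟 : Set (𝒳 × 𝒴 → ℝ)} (h𝒟 : ∀ p ∈ 𝒟, IsDist p)
    (hclosed : IsClosed 𝒟) : IsCompact 𝒟 := by
  refine (isCompact_univ_pi fun _ => isCompact_Icc (a := (0 : ℝ)) (b := 1)).of_isClosed_subset
    hclosed fun p hp => Set.mem_univ_pi.2 fun a => ⟨(h𝒟 p hp).1 a, ?_⟩
  exact (h𝒟 p hp).2 ▸ Finset.single_le_sum (fun b _ => (h𝒟 p hp).1 b) (Finset.mem_univ a)

lemma exists_shift_rule [Nonempty 𝒴] {𝒟 : Set (𝒳 × 𝒴 → ℝ)} (hnonneg : ∀ p ∈ 𝒟, ∀ a, 0 ≤ p a)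
    (hcompact : IsCompact 𝒟) (hconv : Convex ℝ 𝒟) (hne : 𝒟.Nonempty) {ε : ℝ} (hε : 0 < ε) :
    ∃ p₀ ∈ 𝒟, ∀ p ∈ 𝒟,
      logLoss p (condProb ((fun _ => ε) + p₀)) ≤ condEnt ((fun _ => ε) + p₀) := by
  set 𝒞 := (fun p => (fun _ => ε) + p) '' 𝒟
  have hpos : ∀ p ∈ 𝒞, ∀ a, 0 < p a := by
    rintro _ ⟨p, hp, rfl⟩ a
    exact add_pos_of_pos_of_nonneg hε (hnonneg p hp a)
  obtain ⟨_, ⟨p₀, hp₀, rfl⟩, hmax⟩ := (hcompact.image (by fun_prop)).exists_isMaxOn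
    (hne.image _) (continuousOn_condEnt.mono fun p hp a => (hpos p hp a).le)
  refine ⟨p₀, hp₀, fun p hp => ?_⟩
  calc logLoss p (condProb ((fun _ => ε) + p₀))
      ≤ logLoss ((fun _ => ε) + p) (condProb ((fun _ => ε) + p₀)) :=
        logLoss_mono_left (isCond_condProb (hpos _ ⟨p₀, hp₀, rfl⟩))
          fun a => le_add_of_nonneg_left hε.le
    _ ≤ condEnt ((fun _ => ε) + p₀) :=
        logLoss_condProb_le_of_isMaxOn (hconv.translate _) hpos ⟨p₀, hp₀, rfl⟩ hmax ⟨p, hp, rfl⟩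

lemma pos_and_logLoss_le_of_tendsto {ι : Type*} {l : Filter ι} [l.NeBot] (hp : ∀ a, 0 ≤ p a)
    {q : ι → 𝒳 → 𝒴 → ℝ} {q₀ : 𝒳 → 𝒴 → ℝ} {c : ι → ℝ} {c₀ : ℝ}
    (hq : ∀ i, IsCond (q i)) (hqpos : ∀ i x y, 0 < q i x y) (hqlim : Tendsto q l (𝓝 q₀))
    (hclim : Tendsto c l (𝓝 c₀)) (hle : ∀ i, logLoss p (q i) ≤ c i) :
    (∀ a, 0 < p a → 0 < q₀ a.1 a.2) ∧ logLoss p q₀ ≤ c₀ := by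
  have hsupp : ∀ a, 0 < p a → 0 < q₀ a.1 a.2 := by
    intro a hpa
    have hlower : ∀ i, exp (-c i / p a) ≤ q i a.1 a.2 := by
      intro i
      have hterm : p a * -log (q i a.1 a.2) ≤ c i :=
        (Finset.single_le_sum (f := fun b => p b * -log (q i b.1 b.2))
          (fun b _ => mul_nonneg (hp b) ((hq i).neg_log_nonneg b.1 b.2))
          (Finset.mem_univ a)).trans (hle i)
      rw [← le_log_iff_exp_le (hqpos i a.1 a.2), div_le_iff₀ hpa]
      linarith
    have hcoord : Tendsto (fun i => q i a.1 a.2) l (𝓝 (q₀ a.1 a.2)) :=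
      tendsto_pi_nhds.1 (tendsto_pi_nhds.1 hqlim a.1) a.2
    exact (exp_pos _).trans_le (le_of_tendsto_of_tendsto'
      ((continuous_exp.tendsto _).comp (hclim.neg.div_const _)) hcoord hlower)
  refine ⟨hsupp, le_of_tendsto_of_tendsto' ?_ hclim hle⟩
  exact (continuousAt_logLoss fun a ha => (hsupp a ((hp a).lt_of_ne' ha)).ne').tendsto.comp hqlim

lemma CEE_eq_logLoss (hq : ∀ a, 0 < p a → q a.1 a.2 ≠ 0) : CEE p q = logLoss p q := by
  rw [CEE, logLoss,
    Finset.sum_congr rfl fun a _ => if_neg fun h : q a.1 a.2 = 0 ∧ 0 < p a => hq a h.2 h.1]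
  exact (map_sum (⟨⟨Real.toEReal, EReal.coe_zero⟩, EReal.coe_add⟩ : ℝ →+ EReal) _ _).symm

lemma exists_isCond_logLoss_le_condEnt [Nonempty 𝒴] {𝒟 : Set (𝒳 × 𝒴 → ℝ)}
    (hnonneg : ∀ p ∈ 𝒟, ∀ a, 0 ≤ p a) (hcompact : IsCompact 𝒟) (hconv : Convex ℝ 𝒟)
    (hne : 𝒟.Nonempty) :
    ∃ q, IsCond q ∧ ∃ p' ∈ 𝒟, ∀ p ∈ 𝒟,
      (∀ a, 0 < p a → 0 < q a.1 a.2) ∧ logLoss p q ≤ condEnt p' := by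
  set ε : ℕ → ℝ := fun n => 1 / ((n : ℝ) + 1)
  choose P hP hPrule using fun n =>
    exists_shift_rule hnonneg hcompact hconv hne (ε := ε n) (by positivity)
  set r : ℕ → 𝒳 × 𝒴 → ℝ := fun n => (fun _ => ε n) + P n
  have hr_pos : ∀ n a, 0 < r n a := fun n a =>
    add_pos_of_pos_of_nonneg (by positivity) (hnonneg _ (hP n) a)
  obtain ⟨⟨p', q⟩, ⟨hp', hq⟩, φ, hφ, hlim⟩ :=
    (hcompact.prod isCompact_setOf_isCond).tendsto_subseq (x := fun n => (P n, condProb (r n)))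
      fun n => ⟨hP n, isCond_condProb (hr_pos n)⟩
  have hr_lim : Tendsto (r ∘ φ) atTop (𝓝 p') := by
    have hε : Tendsto (ε ∘ φ) atTop (𝓝 0) :=
      tendsto_one_div_add_atTop_nhds_zero_nat.comp hφ.tendsto_atTop
    have := (tendsto_pi_nhds.2 fun _ => hε).add hlim.fst_nhds
    rwa [show ((fun _ => 0) + p' : 𝒳 × 𝒴 → ℝ) = p' from zero_add p'] at this
  have hent : Tendsto (fun n => condEnt (r (φ n))) atTop (𝓝 (condEnt p')) :=
    (continuousOn_condEnt p' (hnonneg p' hp')).tendsto.comp (tendsto_nhdsWithin_iff.2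
      ⟨hr_lim, Eventually.of_forall fun n a => (hr_pos _ a).le⟩)
  exact ⟨q, hq, p', hp', fun p hp => pos_and_logLoss_le_of_tendsto (hnonneg p hp)
    (fun n => isCond_condProb (hr_pos (φ n))) (fun n => condProb_pos (hr_pos (φ n)))
    hlim.snd_nhds hent fun n => hPrule (φ n) p hp⟩

end Loss

/-- with `h* = max_{p∈𝒟} H_p(Y|X)`, the intersection
`∩_{p∈𝒟} {q : E_p[-log q(Y|X)] ≤ h*}` is nonempty: there is a single decision rule
achieving loss at most `h*` simultaneously against every `p ∈ 𝒟`. -/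
theorem exists_simultaneous_robust_rule [Fintype 𝒳] [Fintype 𝒴]
    (𝒟 : Set (𝒳 × 𝒴 → ℝ)) (h𝒟 : ∀ p ∈ 𝒟, IsDist p)
    (hclosed : IsClosed 𝒟) (hconv : Convex ℝ 𝒟) (hne : 𝒟.Nonempty) :
    ∃ q : 𝒳 → 𝒴 → ℝ, IsCond q ∧
      ∀ p ∈ 𝒟, CEE p q ≤ ⨆ p' : 𝒟, ((condEnt p'.1 : ℝ) : EReal) := by
  have : Nonempty 𝒴 := (h𝒟 _ hne.some_mem).nonempty_right
  obtain ⟨q, hq, p', hp', hrule⟩ := exists_isCond_logLoss_le_condEnt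
    (fun p hp => (h𝒟 p hp).1) (isCompact_of_isDist h𝒟 hclosed) hconv hne
  refine ⟨q, hq, fun p hp => ?_⟩
  obtain ⟨hsupp, hle⟩ := hrule p hp
  rw [CEE_eq_logLoss fun a ha => (hsupp a ha).ne']
  exact (EReal.coe_le_coe_iff.2 hle).trans
    (le_iSup (fun p'' : 𝒟 => ((condEnt p''.1 : ℝ) : EReal)) ⟨p', hp'⟩)
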